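/- Let ũ(r) = (3 + 3r)/(√12·√(1 + r + r²)) and ṽ(r) = (r − 1)/(√12·√(1 + r + r²)) for r ∈ ℝ, and let S = {ε·(ũ(r), ṽ(r)) : r ∈ ℝ, ε ∈ {1, −1}} ⊆ ℝ². Then the closure of S equals the ellipse {(u, v) ∈ ℝ² : u² + 3v² = 1}. -/

import Mathlib

open Filter Topology

lemma quad_pos (r : ℝ) : 0 < 1 + r + r ^ 2 := by nlinarith [sq_nonneg (2*r+1)]

lemma sqrt36 : Real.sqrt 12 * Real.sqrt 3 = 6 := by
  rw [← Real.sqrt_mul (by norm_num)]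
  rw [show (12:ℝ) * 3 = 6 ^ 2 by norm_num, Real.sqrt_sq (by norm_num)]

lemma mem_S_of_ellipse (u v : ℝ) (h : u ^ 2 + 3 * v ^ 2 = 1) (hne : u ≠ 3 * v) :
    ∃ r ε : ℝ, (ε = 1 ∨ ε = -1) ∧
      ((u, v) : ℝ × ℝ) = (ε * ((3 + 3 * r) / (Real.sqrt 12 * Real.sqrt (1 + r + r ^ 2))),
        ε * ((r - 1) / (Real.sqrt 12 * Real.sqrt (1 + r + r ^ 2)))) := by
  have hd0 : u - 3 * v ≠ 0 := sub_ne_zero.2 hne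
  refine ⟨(u + 3 * v) / (u - 3 * v), if 0 < u - 3 * v then 1 else -1, by split <;> simp, ?_⟩
  set r := (u + 3 * v) / (u - 3 * v) with hr
  have hq : 1 + r + r ^ 2 = 3 / (u - 3 * v) ^ 2 := by
    rw [eq_div_iff (pow_ne_zero 2 hd0), hr]
    field_simp
    linear_combination 3 * h
  have hD : Real.sqrt 12 * Real.sqrt (1 + r + r ^ 2) = 6 / |u - 3 * v| := by
    rw [hq, Real.sqrt_div (by norm_num), Real.sqrt_sq_eq_abs, ← mul_div_assoc, sqrt36]
  have h3r : 3 + 3 * r = 6 * u / (u - 3 * v) := by rw [hr]; field_simp; ring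
  have hr1 : r - 1 = 6 * v / (u - 3 * v) := by rw [hr]; field_simp; ring
  rw [hD, h3r, hr1, Prod.mk.injEq]
  rcases lt_or_gt_of_ne hd0 with hlt | hgt
  · have habs : |u - 3 * v| = -(u - 3 * v) := abs_of_neg hlt
    rw [if_neg (by linarith)]
    constructor <;> (rw [habs]; field_simp; try (rw [mul_div_cancel_right₀ _ (by contrapose! hd0; linarith)]))
  · have habs : |u - 3 * v| = u - 3 * v := abs_of_pos hgt
    rw [if_pos hgt]
    constructor <;> (rw [habs]; field_simp; try (rw [mul_div_cancel_right₀ _ (by contrapose! hd0; linarith)]))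

lemma sqrt12_eq : Real.sqrt 12 = 2 * Real.sqrt 3 := by
  rw [show (12:ℝ) = 2^2 * 3 by norm_num, Real.sqrt_mul (by positivity), Real.sqrt_sq (by norm_num)]

lemma lim_first : Tendsto (fun r : ℝ => (3 + 3 * r) / (Real.sqrt 12 * Real.sqrt (1 + r + r ^ 2)))
    atTop (𝓝 (Real.sqrt 3 / 2)) := by
  have hinv : Tendsto (fun r : ℝ => r⁻¹) atTop (𝓝 0) := tendsto_inv_atTop_zero
  have harg : Tendsto (fun r : ℝ => r⁻¹ ^ 2 + r⁻¹ + 1) atTop (𝓝 1) := by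
    have := ((hinv.pow 2).add hinv).add_const 1
    simpa using this
  have hden : Tendsto (fun r : ℝ => Real.sqrt 12 * Real.sqrt (r⁻¹ ^ 2 + r⁻¹ + 1)) atTop
      (𝓝 (Real.sqrt 12 * 1)) := by
    have := (Real.continuous_sqrt.tendsto 1).comp harg
    simpa using this.const_mul (Real.sqrt 12)
  have hnum : Tendsto (fun r : ℝ => 3 * r⁻¹ + 3) atTop (𝓝 3) := by
    have := (hinv.const_mul 3).add_const 3
    simpa using this
  have hq : Tendsto (fun r : ℝ => (3 * r⁻¹ + 3) / (Real.sqrt 12 * Real.sqrt (r⁻¹ ^ 2 + r⁻¹ + 1)))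
      atTop (𝓝 (3 / (Real.sqrt 12 * 1))) := hnum.div hden (by positivity)
  have heq : (fun r : ℝ => (3 * r⁻¹ + 3) / (Real.sqrt 12 * Real.sqrt (r⁻¹ ^ 2 + r⁻¹ + 1)))
      =ᶠ[atTop] fun r : ℝ => (3 + 3 * r) / (Real.sqrt 12 * Real.sqrt (1 + r + r ^ 2)) := by
    filter_upwards [eventually_gt_atTop (0:ℝ)] with r hr
    have hr0 : r ≠ 0 := hr.ne'
    have hsq : Real.sqrt (1 + r + r ^ 2) = r * Real.sqrt (r⁻¹ ^ 2 + r⁻¹ + 1) := by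
      rw [show (1 + r + r ^ 2) = r ^ 2 * (r⁻¹ ^ 2 + r⁻¹ + 1) by field_simp,
        Real.sqrt_mul (by positivity), Real.sqrt_sq hr.le]
    rw [hsq]
    rw [div_eq_div_iff (by positivity) (by positivity)]
    field_simp
  have hval : 3 / (Real.sqrt 12 * 1) = Real.sqrt 3 / 2 := by
    rw [mul_one, sqrt12_eq]
    have h3 : Real.sqrt 3 * Real.sqrt 3 = 3 := Real.mul_self_sqrt (by norm_num)
    have : Real.sqrt 3 > 0 := Real.sqrt_pos.2 (by norm_num)
    field_simp
    linarith [h3]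
  rw [← hval]
  exact hq.congr' heq

lemma lim_second : Tendsto (fun r : ℝ => (r - 1) / (Real.sqrt 12 * Real.sqrt (1 + r + r ^ 2)))
    atTop (𝓝 (Real.sqrt 3 / 6)) := by
  have hinv : Tendsto (fun r : ℝ => r⁻¹) atTop (𝓝 0) := tendsto_inv_atTop_zero
  have harg : Tendsto (fun r : ℝ => r⁻¹ ^ 2 + r⁻¹ + 1) atTop (𝓝 1) := by
    have := ((hinv.pow 2).add hinv).add_const 1
    simpa using this
  have hden : Tendsto (fun r : ℝ => Real.sqrt 12 * Real.sqrt (r⁻¹ ^ 2 + r⁻¹ + 1)) atTop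
      (𝓝 (Real.sqrt 12 * 1)) := by
    have := (Real.continuous_sqrt.tendsto 1).comp harg
    simpa using this.const_mul (Real.sqrt 12)
  have hnum : Tendsto (fun r : ℝ => 1 - r⁻¹) atTop (𝓝 1) := by
    have := hinv.const_sub 1
    simpa using this
  have hq : Tendsto (fun r : ℝ => (1 - r⁻¹) / (Real.sqrt 12 * Real.sqrt (r⁻¹ ^ 2 + r⁻¹ + 1)))
      atTop (𝓝 (1 / (Real.sqrt 12 * 1))) := hnum.div hden (by positivity)
  have heq : (fun r : ℝ => (1 - r⁻¹) / (Real.sqrt 12 * Real.sqrt (r⁻¹ ^ 2 + r⁻¹ + 1)))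
      =ᶠ[atTop] fun r : ℝ => (r - 1) / (Real.sqrt 12 * Real.sqrt (1 + r + r ^ 2)) := by
    filter_upwards [eventually_gt_atTop (0:ℝ)] with r hr
    have hr0 : r ≠ 0 := hr.ne'
    have hsq : Real.sqrt (1 + r + r ^ 2) = r * Real.sqrt (r⁻¹ ^ 2 + r⁻¹ + 1) := by
      rw [show (1 + r + r ^ 2) = r ^ 2 * (r⁻¹ ^ 2 + r⁻¹ + 1) by field_simp,
        Real.sqrt_mul (by positivity), Real.sqrt_sq hr.le]
    rw [hsq]
    rw [div_eq_div_iff (by positivity) (by positivity)]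
    field_simp
  have hval : 1 / (Real.sqrt 12 * 1) = Real.sqrt 3 / 6 := by
    rw [mul_one, sqrt12_eq]
    have h3 : Real.sqrt 3 * Real.sqrt 3 = 3 := Real.mul_self_sqrt (by norm_num)
    have : Real.sqrt 3 > 0 := Real.sqrt_pos.2 (by norm_num)
    field_simp
    linarith [h3]
  rw [← hval]
  exact hq.congr' heq

lemma D_pos (r : ℝ) : 0 < Real.sqrt 12 * Real.sqrt (1 + r + r ^ 2) := by
  apply mul_pos <;> apply Real.sqrt_pos.2
  · norm_num
  · exact quad_pos r

lemma D_sq (r : ℝ) : (Real.sqrt 12 * Real.sqrt (1 + r + r ^ 2)) ^ 2 = 12 * (1 + r + r ^ 2) := by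
  rw [mul_pow, Real.sq_sqrt (by norm_num), Real.sq_sqrt (quad_pos r).le]

theorem triangular_limit_points_closure :
    closure {p : ℝ × ℝ | ∃ r ε : ℝ, (ε = 1 ∨ ε = -1) ∧
        p = (ε * ((3 + 3 * r) / (Real.sqrt 12 * Real.sqrt (1 + r + r ^ 2))),
             ε * ((r - 1) / (Real.sqrt 12 * Real.sqrt (1 + r + r ^ 2))))} =
      {p : ℝ × ℝ | p.1 ^ 2 + 3 * p.2 ^ 2 = 1} := by
  set S := {p : ℝ × ℝ | ∃ r ε : ℝ, (ε = 1 ∨ ε = -1) ∧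
        p = (ε * ((3 + 3 * r) / (Real.sqrt 12 * Real.sqrt (1 + r + r ^ 2))),
             ε * ((r - 1) / (Real.sqrt 12 * Real.sqrt (1 + r + r ^ 2))))} with hS
  have hlim : Tendsto (fun r : ℝ =>
      ((3 + 3 * r) / (Real.sqrt 12 * Real.sqrt (1 + r + r ^ 2)),
       (r - 1) / (Real.sqrt 12 * Real.sqrt (1 + r + r ^ 2)))) atTop
      (𝓝 (Real.sqrt 3 / 2, Real.sqrt 3 / 6)) := lim_first.prodMk_nhds lim_second
  apply Set.Subset.antisymm
  · apply closure_minimal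
    · rintro ⟨u, v⟩ ⟨r, ε, hε, hp⟩
      have hε2 : ε ^ 2 = 1 := by rcases hε with h | h <;> simp [h]
      have hD2 := D_sq r
      have hDne : Real.sqrt 12 * Real.sqrt (1 + r + r ^ 2) ≠ 0 := (D_pos r).ne'
      simp only [Prod.mk.injEq] at hp
      obtain ⟨h1, h2⟩ := hp
      simp only [Set.mem_setOf_eq, h1, h2]
      field_simp
      rw [Real.sq_sqrt (quad_pos r).le, Real.sq_sqrt (by norm_num), div_eq_iff (quad_pos r).ne']
      linear_combination 12 * (1 + r + r ^ 2) * hε2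
    · have : {p : ℝ × ℝ | p.1 ^ 2 + 3 * p.2 ^ 2 = 1} =
          (fun p : ℝ × ℝ => p.1 ^ 2 + 3 * p.2 ^ 2) ⁻¹' {1} := rfl
      rw [this]
      exact isClosed_singleton.preimage (by fun_prop)
  · rintro ⟨u, v⟩ hp
    simp only [Set.mem_setOf_eq] at hp
    by_cases hc : u = 3 * v
    · -- exceptional points
      have hv2 : v ^ 2 = (Real.sqrt 3 / 6) ^ 2 := by
        rw [div_pow, Real.sq_sqrt (by norm_num)]
        rw [hc] at hp
        nlinarith [hp]
      have hv := sq_eq_sq_iff_eq_or_eq_neg.mp hv2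
      rcases hv with hv | hv
      · have hu : u = Real.sqrt 3 / 2 := by rw [hc, hv]; ring
        have hpt : ((u, v) : ℝ × ℝ) = (Real.sqrt 3 / 2, Real.sqrt 3 / 6) := by rw [hu, hv]
        rw [hpt]
        refine mem_closure_of_tendsto hlim ?_
        filter_upwards with r
        exact ⟨r, 1, Or.inl rfl, by norm_num⟩
      · have hu : u = -(Real.sqrt 3 / 2) := by rw [hc, hv]; ring
        have hpt : ((u, v) : ℝ × ℝ) = -(Real.sqrt 3 / 2, Real.sqrt 3 / 6) := by
          rw [hu, hv]; rfl
        rw [hpt]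
        refine mem_closure_of_tendsto hlim.neg ?_
        filter_upwards with r
        exact ⟨r, -1, Or.inr rfl, by simp⟩
    · exact subset_closure (mem_S_of_ellipse u v hp hc)
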